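/- arXiv:2012.15707 — 4 statements merged into one kernel-verified Lean document; each statement's English description precedes it below -/
import Mathlib

section
/- Let P ⊂ E be a projectively generating subcategory of an exact category E (all objects of P are projective and every object of E admits a deflation from an object of P). Then for every abelian category B, restriction Γ : Rex(E, B) → Fun(P, B), F ↦ F|_P, is an equivalence of categories. -/
open CategoryTheory CategoryTheory.Limits ZeroObject

universe v u

namespace ExactCatPaper

variable (E : Type u) [Category.{v} E] [Preadditive E] [HasZeroObject E]

/-- An exact structure on an additive category `E`, following Quillen/Keller:
a class of conflations (kernel–cokernel pairs) closed under isomorphism,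
containing identities, with deflations closed under composition and stable
under pullback, and inflations stable under pushout. -/
structure ExactStructure where
  conf : ∀ {X Y Z : E}, (X ⟶ Y) → (Y ⟶ Z) → Prop
  comp_zero : ∀ {X Y Z : E} {i : X ⟶ Y} {d : Y ⟶ Z}, conf i d → i ≫ d = 0
  is_kernel : ∀ {X Y Z : E} {i : X ⟶ Y} {d : Y ⟶ Z}, conf i d →
    ∀ {W : E} (f : W ⟶ Y), f ≫ d = 0 → ∃! g : W ⟶ X, g ≫ i = f
  is_cokernel : ∀ {X Y Z : E} {i : X ⟶ Y} {d : Y ⟶ Z}, conf i d →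
    ∀ {W : E} (f : Y ⟶ W), i ≫ f = 0 → ∃! g : Z ⟶ W, d ≫ g = f
  conf_iso : ∀ {X Y Z X' Y' Z' : E} (eX : X ≅ X') (eY : Y ≅ Y') (eZ : Z ≅ Z')
      {i : X ⟶ Y} {d : Y ⟶ Z}, conf i d →
      conf (eX.inv ≫ i ≫ eY.hom) (eY.inv ≫ d ≫ eZ.hom)
  conf_id : ∀ X : E, conf (0 : (0 : E) ⟶ X) (𝟙 X)
  defl_comp : ∀ {X Y Z : E} {d : X ⟶ Y} {d' : Y ⟶ Z},
      (∃ (A : E) (i : A ⟶ X), conf i d) → (∃ (A : E) (i : A ⟶ Y), conf i d') →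
      ∃ (A : E) (i : A ⟶ X), conf i (d ≫ d')
  pullback_defl : ∀ {Y Z W : E} (d : Y ⟶ Z) (f : W ⟶ Z),
      (∃ (A : E) (i : A ⟶ Y), conf i d) →
      ∃ (P : E) (p₁ : P ⟶ Y) (p₂ : P ⟶ W), IsPullback p₁ p₂ d f ∧
        ∃ (A : E) (i : A ⟶ P), conf i p₂
  pushout_infl : ∀ {X Y W : E} (i : X ⟶ Y) (f : X ⟶ W),
      (∃ (Z : E) (d : Y ⟶ Z), conf i d) →
      ∃ (P : E) (j : W ⟶ P) (g : Y ⟶ P), IsPushout i f g j ∧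
        ∃ (Z : E) (d : P ⟶ Z), conf j d

variable {E}

/-- `i` is an inflation: it is part of some conflation. -/
def ExactStructure.IsInflation (S : ExactStructure E) {X Y : E} (i : X ⟶ Y) : Prop :=
  ∃ (Z : E) (d : Y ⟶ Z), S.conf i d

/-- `d` is a deflation: it is part of some conflation. -/
def ExactStructure.IsDeflation (S : ExactStructure E) {Y Z : E} (d : Y ⟶ Z) : Prop :=
  ∃ (X : E) (i : X ⟶ Y), S.conf i d

/-- The right Hom-orthogonal `T^{⊥₀}` of a full subcategory. -/
def homOrthRight (T : Set E) : Set E :=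
  {X | ∀ t ∈ T, ∀ f : t ⟶ X, f = 0}

/-- The left Hom-orthogonal `^{⊥₀}F` of a full subcategory. -/
def homOrthLeft (F : Set E) : Set E :=
  {X | ∀ f' ∈ F, ∀ g : X ⟶ f', g = 0}

/-- A full subcategory is closed under extensions. -/
def ExtClosed (S : ExactStructure E) (T : Set E) : Prop :=
  ∀ {X Y Z : E} {i : X ⟶ Y} {d : Y ⟶ Z}, S.conf i d → X ∈ T → Z ∈ T → Y ∈ T

/-- `T` is weakly right admissible: a fully exact (extension-closed) subcategory such that
the inclusion admits a right adjoint (expressed pointwise as a coreflection) whose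
adjunction counit is an inflation. -/
def IsWeaklyRightAdmissible (S : ExactStructure E) (T : Set E) : Prop :=
  ExtClosed S T ∧
  ∀ X : E, ∃ (T' : E) (ε : T' ⟶ X), T' ∈ T ∧ S.IsInflation ε ∧
    ∀ W : E, W ∈ T → ∀ f : W ⟶ X, ∃! g : W ⟶ T', g ≫ ε = f

/-- `F` is weakly left admissible: the dual notion. -/
def IsWeaklyLeftAdmissible (S : ExactStructure E) (F : Set E) : Prop :=
  ExtClosed S F ∧
  ∀ X : E, ∃ (F' : E) (η : X ⟶ F'), F' ∈ F ∧ S.IsDeflation η ∧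
    ∀ W : E, W ∈ F → ∀ f : X ⟶ W, ∃! g : F' ⟶ W, η ≫ g = f

/-- `(T, F)` is a torsion pair: `Hom(T,F) = 0` and every object fits into a conflation
with torsion part in `T` and torsion-free part in `F`. -/
def IsTorsionPair (S : ExactStructure E) (T F : Set E) : Prop :=
  (∀ t ∈ T, ∀ f ∈ F, ∀ g : t ⟶ f, g = 0) ∧
  ∀ X : E, ∃ (t f : E) (i : t ⟶ X) (d : X ⟶ f), t ∈ T ∧ f ∈ F ∧ S.conf i d

/-- The right perpendicular subcategory `T^⊥` (Hom and Ext¹ vanishing; Ext¹-vanishing is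
expressed by the splitting of all conflations `X → M → t` with `t ∈ T`). -/
def rightPerp (S : ExactStructure E) (T : Set E) : Set E :=
  {X | ∀ t ∈ T, (∀ f : t ⟶ X, f = 0) ∧
    ∀ (M : E) (i : X ⟶ M) (d : M ⟶ t), S.conf i d → ∃ r : M ⟶ X, i ≫ r = 𝟙 X}

/-- A torsion pair `(T,F)` is perpendicular if moreover `Ext¹(T,F) = 0`, i.e. every
conflation `f' → X → t` with `f' ∈ F`, `t ∈ T` splits. -/
def IsPerpTorsionPair (S : ExactStructure E) (T F : Set E) : Prop :=
  IsTorsionPair S T F ∧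
  ∀ {f' X t : E} (i : f' ⟶ X) (d : X ⟶ t), S.conf i d → f' ∈ F → t ∈ T →
    ∃ r : X ⟶ f', i ≫ r = 𝟙 f'


variable {B : Type*} [Category B] [Abelian B]

/-- An additive functor `F : E ⥤ B` to an abelian category is right exact: it sends every
conflation `X → Y → Z` to an exact sequence `F X → F Y → F Z → 0`. -/
def IsRightExact (S : ExactStructure E) (F : E ⥤ B) : Prop :=
  F.Additive ∧
  ∀ {X Y Z : E} (i : X ⟶ Y) (d : Y ⟶ Z), S.conf i d →
    Epi (F.map d) ∧
      ∀ (w : F.map i ≫ F.map d = 0), (ShortComplex.mk (F.map i) (F.map d) w).Exact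

lemma restriction_additive (S : ExactStructure E) (P : Set E)
    (F : ObjectProperty.FullSubcategory (IsRightExact (B := B) S)) :
    (ObjectProperty.ι (· ∈ P) ⋙ F.obj).Additive := by
  haveI := F.property.1
  infer_instance

/-- The restriction functor `Γ : Rex(E, B) ⥤ Fun(P, B)`, `F ↦ F|_P`, to the category of
additive functors on the projectively generating subcategory `P`. -/
def restrictionToP (S : ExactStructure E) (P : Set E) :
    ObjectProperty.FullSubcategory (IsRightExact (B := B) S) ⥤
      ObjectProperty.FullSubcategory (fun G : ObjectProperty.FullSubcategory (· ∈ P) ⥤ B => G.Additive) where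
  obj F := ⟨ObjectProperty.ι (· ∈ P) ⋙ F.obj, restriction_additive S P F⟩
  map α := ObjectProperty.homMk (Functor.whiskerLeft (ObjectProperty.ι (· ∈ P)) α.hom)


/-!
Every object `X` has a presentation `p₁ ⟶ p₀ ⟶ X` by objects of `P`, obtained from a conflation
`K ⟶ p₀ ⟶ X` and a deflation `p₁ ⟶ K`. A right exact functor `F` turns it into a cokernel
diagram `F p₁ ⟶ F p₀ ⟶ F X ⟶ 0`, so `F` and the natural transformations out of `F` are
determined by their restrictions to `P`: restriction is faithful and full.

For essential surjectivity, extend an additive `Φ` on `P` by `X ↦ coker (Φ p₁ ⟶ Φ p₀)`. As the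
objects of `P` are projective, every `f : x ⟶ X` with `x ∈ P` lifts to `p₀`, and two lifts differ
by a map factoring through `p₁`; so `f` induces a well-defined `Φ x ⟶ coker (Φ p₁ ⟶ Φ p₀)`,
additive in `f` and compatible with composition. Functoriality, right exactness and the
isomorphism with `Φ` on `P` follow by testing against these maps.
-/

open ObjectProperty

@[simp]
lemma _root_.CategoryTheory.ObjectProperty.FullSubcategory.add_hom {C : Type*} [Category C]
    [Preadditive C] {Q : ObjectProperty C} {x y : Q.FullSubcategory} (f g : x ⟶ y) :
    (f + g).hom = f.hom + g.hom :=
  rfl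

@[simp]
lemma _root_.CategoryTheory.ObjectProperty.FullSubcategory.sub_hom {C : Type*} [Category C]
    [Preadditive C] {Q : ObjectProperty C} {x y : Q.FullSubcategory} (f g : x ⟶ y) :
    (f - g).hom = f.hom - g.hom :=
  rfl

def ExactStructure.IsProjective (S : ExactStructure E) (p : E) : Prop :=
  ∀ {Y Z : E} (d : Y ⟶ Z), S.IsDeflation d → ∀ f : p ⟶ Z, ∃ g : p ⟶ Y, g ≫ d = f

class IsProjectivelyGenerating (S : ExactStructure E) (P : Set E) : Prop where
  projective : ∀ p ∈ P, S.IsProjective p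
  generating : ∀ X : E, ∃ (p : E) (d : p ⟶ X), p ∈ P ∧ S.IsDeflation d

structure Presentation (S : ExactStructure E) (P : Set E) (X : E) where
  p₀ : FullSubcategory (· ∈ P)
  d₀ : p₀.obj ⟶ X
  K : E
  i : K ⟶ p₀.obj
  conf : S.conf i d₀
  p₁ : FullSubcategory (· ∈ P)
  e : p₁.obj ⟶ K
  defl : S.IsDeflation e

namespace Presentation

variable {S : ExactStructure E} {P : Set E} {X : E} (σ : Presentation S P X)

def d₁ : σ.p₁ ⟶ σ.p₀ := homMk (σ.e ≫ σ.i)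

lemma d₁_hom_d₀ : σ.d₁.hom ≫ σ.d₀ = 0 := by
  simp [d₁, S.comp_zero σ.conf]

lemma isDeflation_d₀ : S.IsDeflation σ.d₀ := ⟨σ.K, σ.i, σ.conf⟩

lemma nonempty (hgen : ∀ X : E, ∃ (p : E) (d : p ⟶ X), p ∈ P ∧ S.IsDeflation d) (X : E) :
    Nonempty (Presentation S P X) := by
  obtain ⟨p₀, d₀, hp₀, K, i, conf⟩ := hgen X
  obtain ⟨p₁, e, hp₁, defl⟩ := hgen K
  exact ⟨⟨⟨p₀, hp₀⟩, d₀, K, i, conf, ⟨p₁, hp₁⟩, e, defl⟩⟩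

noncomputable def lift {x : FullSubcategory (· ∈ P)} (hx : S.IsProjective x.obj)
    (f : x.obj ⟶ X) : x ⟶ σ.p₀ :=
  homMk (hx σ.d₀ σ.isDeflation_d₀ f).choose

@[simp]
lemma lift_hom_d₀ {x : FullSubcategory (· ∈ P)} (hx : S.IsProjective x.obj) (f : x.obj ⟶ X) :
    (σ.lift hx f).hom ≫ σ.d₀ = f :=
  (hx σ.d₀ σ.isDeflation_d₀ f).choose_spec

lemma exists_comp_d₁_eq {x : FullSubcategory (· ∈ P)} (hx : S.IsProjective x.obj)
    (g : x ⟶ σ.p₀) (hg : g.hom ≫ σ.d₀ = 0) : ∃ m : x ⟶ σ.p₁, m ≫ σ.d₁ = g := by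
  obtain ⟨k, hk, -⟩ := S.is_kernel σ.conf g.hom hg
  obtain ⟨m, hm⟩ := hx σ.e σ.defl k
  refine ⟨homMk m, ?_⟩
  ext
  simp [d₁, reassoc_of% hm, hk]

noncomputable def isColimitCokernelCoforkMap {F : E ⥤ B} (hF : IsRightExact S F) :
    IsColimit (CokernelCofork.ofπ (f := F.map σ.d₁.hom) (F.map σ.d₀)
      (by have := hF.1; rw [← F.map_comp, σ.d₁_hom_d₀, F.map_zero])) := by
  have := hF.1
  obtain ⟨hd₀, hexact⟩ := hF.2 σ.i σ.d₀ σ.conf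
  have : Epi (F.map σ.e) := by
    obtain ⟨A, j, hj⟩ := σ.defl
    exact (hF.2 j σ.e hj).1
  have hi : F.map σ.i ≫ F.map σ.d₀ = 0 := by rw [← F.map_comp, S.comp_zero σ.conf, F.map_zero]
  exact isCokernelEpiComp (hexact hi).gIsCokernel (F.map σ.e) (F.map_comp _ _)

end Presentation

section Extension

variable (S : ExactStructure E) (P : Set E) [IsProjectivelyGenerating S P]

noncomputable def presentation (X : E) : Presentation S P X :=
  (Presentation.nonempty IsProjectivelyGenerating.generating X).some

variable {P}

lemma isProjective (x : FullSubcategory (· ∈ P)) : S.IsProjective x.obj :=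
  IsProjectivelyGenerating.projective x.obj x.property

variable (Φ : FullSubcategory (· ∈ P) ⥤ B) [Φ.Additive]

noncomputable abbrev extensionObj (X : E) : B :=
  cokernel (Φ.map (presentation S P X).d₁)

noncomputable abbrev extensionπ (X : E) :
    Φ.obj (presentation S P X).p₀ ⟶ extensionObj S Φ X :=
  cokernel.π _

variable {S Φ}

lemma map_comp_extensionπ_eq {X : E} {x : FullSubcategory (· ∈ P)}
    (g g' : x ⟶ (presentation S P X).p₀)
    (h : g.hom ≫ (presentation S P X).d₀ = g'.hom ≫ (presentation S P X).d₀) :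
    Φ.map g ≫ extensionπ S Φ X = Φ.map g' ≫ extensionπ S Φ X := by
  obtain ⟨m, hm⟩ := (presentation S P X).exists_comp_d₁_eq (isProjective S x) (g - g')
    (by simp [Preadditive.sub_comp, h])
  rw [← sub_eq_zero, ← Preadditive.sub_comp, ← Φ.map_sub, ← hm, Φ.map_comp, Category.assoc,
    cokernel.condition, comp_zero]

variable (S Φ)

noncomputable def toExtension (x : FullSubcategory (· ∈ P)) (X : E) :
    (x.obj ⟶ X) →+ (Φ.obj x ⟶ extensionObj S Φ X) :=
  AddMonoidHom.mk'
    (fun f => Φ.map ((presentation S P X).lift (isProjective S x) f) ≫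
      extensionπ S Φ X)
    fun f f' => by
      rw [← Preadditive.add_comp, ← Φ.map_add]
      refine map_comp_extensionπ_eq _ _ ?_
      simp only [FullSubcategory.add_hom, Preadditive.add_comp, Presentation.lift_hom_d₀]

variable {S Φ}

lemma toExtension_apply {x : FullSubcategory (· ∈ P)} {X : E} (f : x.obj ⟶ X) :
    toExtension S Φ x X f =
      Φ.map ((presentation S P X).lift (isProjective S x) f) ≫ extensionπ S Φ X :=
  rfl

lemma toExtension_eq {x : FullSubcategory (· ∈ P)} {X : E} {f : x.obj ⟶ X}
    (g : x ⟶ (presentation S P X).p₀) (hg : g.hom ≫ (presentation S P X).d₀ = f) :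
    toExtension S Φ x X f = Φ.map g ≫ extensionπ S Φ X :=
  map_comp_extensionπ_eq _ _ (by rw [Presentation.lift_hom_d₀, hg])

lemma map_comp_toExtension {x y : FullSubcategory (· ∈ P)} {X : E} (g : x ⟶ y)
    (f : y.obj ⟶ X) :
    Φ.map g ≫ toExtension S Φ y X f = toExtension S Φ x X (g.hom ≫ f) := by
  rw [toExtension_apply, ← Category.assoc, ← Φ.map_comp]
  exact (toExtension_eq _ (by simp)).symm

lemma toExtension_d₀ (X : E) :
    toExtension S Φ (presentation S P X).p₀ X (presentation S P X).d₀ = extensionπ S Φ X := by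
  rw [toExtension_eq (𝟙 _) (Category.id_comp _), Φ.map_id, Category.id_comp]

variable (S Φ)

noncomputable def extensionMap {X Y : E} (f : X ⟶ Y) :
    extensionObj S Φ X ⟶ extensionObj S Φ Y :=
  cokernel.desc _ (toExtension S Φ _ Y ((presentation S P X).d₀ ≫ f)) (by
    rw [map_comp_toExtension, ← Category.assoc, Presentation.d₁_hom_d₀, zero_comp, map_zero])

variable {S Φ}

lemma extensionπ_extensionMap {X Y : E} (f : X ⟶ Y) :
    extensionπ S Φ X ≫ extensionMap S Φ f =
      toExtension S Φ _ Y ((presentation S P X).d₀ ≫ f) :=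
  cokernel.π_desc _ _ _

lemma toExtension_extensionMap {x : FullSubcategory (· ∈ P)} {X Y : E} (g : x.obj ⟶ X)
    (f : X ⟶ Y) : toExtension S Φ x X g ≫ extensionMap S Φ f = toExtension S Φ x Y (g ≫ f) := by
  rw [toExtension_apply, Category.assoc, extensionπ_extensionMap, map_comp_toExtension,
    ← Category.assoc, Presentation.lift_hom_d₀]

variable (S Φ)

noncomputable def extension : E ⥤ B where
  obj := extensionObj S Φ
  map := extensionMap S Φ
  map_id X := by
    rw [← cancel_epi (extensionπ S Φ X), extensionπ_extensionMap, Category.comp_id,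
      Category.comp_id, toExtension_d₀]
  map_comp {X _ _} f g := by
    rw [← cancel_epi (extensionπ S Φ X), ← Category.assoc, extensionπ_extensionMap,
      extensionπ_extensionMap, toExtension_extensionMap, Category.assoc]

instance : (extension S Φ).Additive where
  map_add {X _ f g} := by
    change extensionMap S Φ (f + g) = extensionMap S Φ f + extensionMap S Φ g
    rw [← cancel_epi (extensionπ S Φ X)]
    simp only [Preadditive.comp_add, extensionπ_extensionMap, map_add]

variable {S Φ}

lemma toExtension_comp_eq_of_comp_eq {X Y Z : E} {i : X ⟶ Y} {d : Y ⟶ Z} (hconf : S.conf i d)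
    {W : B} {t : extensionObj S Φ Y ⟶ W} (ht : extensionMap S Φ i ≫ t = 0)
    {x : FullSubcategory (· ∈ P)} {f f' : x.obj ⟶ Y} (h : f ≫ d = f' ≫ d) :
    toExtension S Φ x Y f ≫ t = toExtension S Φ x Y f' ≫ t := by
  obtain ⟨k, hk, -⟩ := S.is_kernel hconf (f - f') (by rw [Preadditive.sub_comp, h, sub_self])
  rw [← sub_eq_zero, ← Preadditive.sub_comp, ← map_sub, ← hk, ← toExtension_extensionMap,
    Category.assoc, ht, comp_zero]

variable (S Φ)

lemma nonempty_isColimit_extension_map {X Y Z : E} {i : X ⟶ Y} {d : Y ⟶ Z}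
    (hconf : S.conf i d) :
    Nonempty (IsColimit (CokernelCofork.ofπ (f := (extension S Φ).map i) ((extension S Φ).map d)
      (by rw [← (extension S Φ).map_comp, S.comp_zero hconf, Functor.map_zero]))) := by
  let σ := presentation S P Z
  let σY := presentation S P Y
  obtain ⟨h, hh⟩ := isProjective S σ.p₀ d ⟨X, i, hconf⟩ σ.d₀
  have hπ : toExtension S Φ σ.p₀ Y h ≫ extensionMap S Φ d = extensionπ S Φ Z := by
    rw [toExtension_extensionMap, hh, toExtension_d₀]
  have : Epi ((extension S Φ).map d) := (epi_of_epi_fac hπ : Epi (extensionMap S Φ d))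
  refine ⟨CokernelCofork.IsColimit.ofπ' _ _ fun {W} (t : extensionObj S Φ Y ⟶ W) ht =>
    ⟨cokernel.desc _ (toExtension S Φ σ.p₀ Y h ≫ t) ?_, ?_⟩⟩
  · rw [← Category.assoc, map_comp_toExtension, toExtension_comp_eq_of_comp_eq hconf ht
      (f' := 0) (by rw [Category.assoc, hh, Presentation.d₁_hom_d₀, zero_comp]), map_zero,
      zero_comp]
  · change extensionMap S Φ d ≫ _ = t
    rw [← cancel_epi (extensionπ S Φ Y), ← Category.assoc, extensionπ_extensionMap,
      toExtension_eq (σ.lift (isProjective S σY.p₀) (σY.d₀ ≫ d)) (σ.lift_hom_d₀ _ _),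
      Category.assoc, cokernel.π_desc, ← Category.assoc, map_comp_toExtension,
      toExtension_comp_eq_of_comp_eq hconf ht (f' := σY.d₀)
        (by rw [Category.assoc, hh, σ.lift_hom_d₀]), toExtension_d₀]

theorem isRightExact_extension : IsRightExact S (extension S Φ) := by
  refine ⟨inferInstance, fun i d hconf => ?_⟩
  obtain ⟨hc⟩ := nonempty_isColimit_extension_map S Φ hconf
  exact ⟨epi_of_isColimit_cofork hc, fun _ => ShortComplex.exact_of_g_is_cokernel _ hc⟩

noncomputable def restrictionIsoApp (x : FullSubcategory (· ∈ P)) :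
    Φ.obj x ≅ extensionObj S Φ x.obj where
  hom := toExtension S Φ x x.obj (𝟙 _)
  inv := cokernel.desc _ (Φ.map (homMk (presentation S P x.obj).d₀)) (by
    rw [← Φ.map_comp,
      show _ ≫ homMk _ = 0 from ObjectProperty.hom_ext _ (Presentation.d₁_hom_d₀ _), Φ.map_zero])
  hom_inv_id := by
    rw [toExtension_apply, Category.assoc, cokernel.π_desc, ← Φ.map_comp, ← Φ.map_id]
    congr 1
    ext
    simp
  inv_hom_id := by
    rw [← cancel_epi (extensionπ S Φ x.obj), ← Category.assoc, cokernel.π_desc,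
      map_comp_toExtension, Category.comp_id, Category.comp_id]
    exact toExtension_d₀ x.obj

noncomputable def restrictionIso : Φ ≅ ObjectProperty.ι (· ∈ P) ⋙ extension S Φ :=
  NatIso.ofComponents (restrictionIsoApp S Φ) fun {x y} f => by
    change Φ.map f ≫ toExtension S Φ y y.obj (𝟙 _) =
      toExtension S Φ x x.obj (𝟙 _) ≫ extensionMap S Φ f.hom
    rw [map_comp_toExtension, toExtension_extensionMap, Category.comp_id, Category.id_comp]

end Extension

section Restriction

variable {S : ExactStructure E} {P : Set E} {F G : E ⥤ B}

lemma natTrans_ext_of_whiskerLeft_eq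
    (hgen : ∀ X : E, ∃ (p : E) (d : p ⟶ X), p ∈ P ∧ S.IsDeflation d) (hF : IsRightExact S F)
    {α β : F ⟶ G} (h : Functor.whiskerLeft (ObjectProperty.ι (· ∈ P)) α =
      Functor.whiskerLeft (ObjectProperty.ι (· ∈ P)) β) : α = β := by
  ext X
  obtain ⟨p, d, hp, K, i, hconf⟩ := hgen X
  have : Epi (F.map d) := (hF.2 i d hconf).1
  rw [← cancel_epi (F.map d), α.naturality, β.naturality]
  exact congrArg (· ≫ G.map d) (NatTrans.congr_app h ⟨p, hp⟩)

variable [IsProjectivelyGenerating S P] (hF : IsRightExact S F) [G.PreservesZeroMorphisms]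
  (β : ObjectProperty.ι (· ∈ P) ⋙ F ⟶ ObjectProperty.ι (· ∈ P) ⋙ G)

noncomputable def extendApp (X : E) : F.obj X ⟶ G.obj X :=
  ((presentation S P X).isColimitCokernelCoforkMap hF).desc (CokernelCofork.ofπ
    (β.app (presentation S P X).p₀ ≫ G.map (presentation S P X).d₀) (by
      have := β.naturality (presentation S P X).d₁
      dsimp at this
      rw [← Category.assoc, this, Category.assoc, ← G.map_comp, Presentation.d₁_hom_d₀,
        G.map_zero, comp_zero]))

lemma map_comp_extendApp {X : E} (x : FullSubcategory (· ∈ P)) (w : x.obj ⟶ X) :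
    F.map w ≫ extendApp hF β X = β.app x ≫ G.map w := by
  let σ := presentation S P X
  have hπ : F.map σ.d₀ ≫ extendApp hF β X = β.app σ.p₀ ≫ G.map σ.d₀ :=
    Cofork.IsColimit.π_desc (σ.isColimitCokernelCoforkMap hF)
  have hl := σ.lift_hom_d₀ (isProjective S x) w
  have hβ := β.naturality (σ.lift (isProjective S x) w)
  dsimp at hβ
  rw [← hl, F.map_comp, Category.assoc, hπ, ← Category.assoc, hβ, Category.assoc, G.map_comp]

noncomputable def extendNatTrans : F ⟶ G where
  app := extendApp hF β
  naturality X Y f := by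
    let σ := presentation S P X
    have : Epi (F.map σ.d₀) := (hF.2 σ.i σ.d₀ σ.conf).1
    rw [← cancel_epi (F.map σ.d₀), ← Category.assoc, ← F.map_comp, map_comp_extendApp,
      ← Category.assoc, map_comp_extendApp, Category.assoc, G.map_comp]

lemma whiskerLeft_extendNatTrans :
    Functor.whiskerLeft (ObjectProperty.ι (· ∈ P)) (extendNatTrans hF β) = β := by
  ext x
  simpa [extendNatTrans] using map_comp_extendApp hF β x (𝟙 x.obj)

end Restriction

/-- Let `P ⊂ E` be a projectively generating subcategory of an exact
category `E` (all objects of `P` are projective — they have the lifting property against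
deflations, equivalently `Ext¹(P,−) = 0` — and every object of `E` admits a deflation
from an object of `P`). Then for every abelian category `B`, the restriction
`Γ : Rex(E, B) → Fun(P, B)`, `F ↦ F|_P`, is an equivalence of categories. -/
theorem restriction_equivalence
    (S : ExactStructure E) (P : Set E)
    (hproj : ∀ p ∈ P, ∀ {Y Z : E} (d : Y ⟶ Z), S.IsDeflation d →
      ∀ f : p ⟶ Z, ∃ g : p ⟶ Y, g ≫ d = f)
    (hgen : ∀ X : E, ∃ (p : E) (d : p ⟶ X), p ∈ P ∧ S.IsDeflation d) :
    (restrictionToP (B := B) S P).IsEquivalence := by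
  have : IsProjectivelyGenerating S P := ⟨hproj, hgen⟩
  have faithful : (restrictionToP (B := B) S P).Faithful :=
    ⟨fun {F _} _ _ h => ObjectProperty.hom_ext _
      (natTrans_ext_of_whiskerLeft_eq hgen F.property (congrArg (·.hom) h))⟩
  have full : (restrictionToP (B := B) S P).Full :=
    ⟨fun {F G} β => by
      have := G.property.1
      exact ⟨ObjectProperty.homMk (extendNatTrans F.property β.hom),
        ObjectProperty.hom_ext _ (whiskerLeft_extendNatTrans F.property β.hom)⟩⟩
  have essSurj : (restrictionToP (B := B) S P).EssSurj :=
    ⟨fun Φ => by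
      have := Φ.property
      exact ⟨⟨extension S Φ.obj, isRightExact_extension S Φ.obj⟩,
        ⟨ObjectProperty.isoMk _ (restrictionIso S Φ.obj).symm⟩⟩⟩
  exact { }

end ExactCatPaper
end

section
/- Let C be a k-linear additive category additively generated by finitely many objects C₁, …, Cₙ. If the endomorphism algebra A = End(⊕ᵢ Cᵢ) is right coherent, then C has weak kernels. -/
open CategoryTheory CategoryTheory.Limits

universe v u

namespace CoherentWeakKernels

/-- A ring is right coherent if every finitely generated right ideal is finitely
presented (right ideals are submodules of `A` as a right `A`-module, i.e. as an
`Aᵐᵒᵖ`-module). -/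
def RightCoherentRing (A : Type*) [Ring A] : Prop :=
  ∀ I : Submodule Aᵐᵒᵖ A, I.FG → Module.FinitePresentation Aᵐᵒᵖ I

/-!
Put `G = ⨁ Cobj` and `A = End G`. Every object is a retract of a finite power of `G`, so
`Hom(G, X)` is a finitely generated right `A`-module and `Hom(G, Y)` embeds into some `Aᵠ`.
Over a right coherent ring the kernel of a map from a finitely generated module to `Aᵠ` is
finitely generated (intersect the kernels of the coordinates one at a time), so
`ker Hom(G, f)` has finitely many generators `φₜ : G ⟶ X`. Then `⨁ₜ φₜ : ⨁ₜ G ⟶ X` is a weak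
kernel of `f`: a test map `G ⟶ X` factors through it by the very meaning of generation, and a
test map out of an arbitrary `Z` does so after precomposing with a retraction of a power of
`G` onto `Z`.
-/

namespace RightCoherentRing

variable {A : Type*} [Ring A] {M : Type*} [AddCommGroup M] [Module Aᵐᵒᵖ M]

theorem fg_ker (hA : RightCoherentRing A) [Module.Finite Aᵐᵒᵖ M] (f : M →ₗ[Aᵐᵒᵖ] A) :
    (LinearMap.ker f).FG := by
  have := hA _ (Submodule.fg_range f)
  rw [← LinearMap.ker_rangeRestrict]
  exact Module.FinitePresentation.fg_ker _ f.surjective_rangeRestrict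

theorem fg_inf_ker (hA : RightCoherentRing A) {K : Submodule Aᵐᵒᵖ M} (hK : K.FG)
    (f : M →ₗ[Aᵐᵒᵖ] A) : (K ⊓ LinearMap.ker f).FG := by
  have : Module.Finite Aᵐᵒᵖ K := Module.Finite.iff_fg.mpr hK
  rw [← Submodule.map_comap_subtype, ← LinearMap.ker_comp]
  exact (hA.fg_ker (f ∘ₗ K.subtype)).map _

theorem fg_ker_pi (hA : RightCoherentRing A) {ι : Type*} [Finite ι] [Module.Finite Aᵐᵒᵖ M]
    (u : M →ₗ[Aᵐᵒᵖ] ι → A) : (LinearMap.ker u).FG := by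
  classical
  have := Fintype.ofFinite ι
  rw [← LinearMap.pi_proj_comp u, LinearMap.ker_pi, ← Finset.inf_univ_eq_iInf]
  induction (Finset.univ : Finset ι) using Finset.induction_on with
  | empty => exact Module.Finite.fg_top
  | insert i s _ ih => rw [Finset.inf_insert, inf_comm]; exact hA.fg_inf_ker ih _

end RightCoherentRing

section

variable {C : Type u} [Category.{v} C] [Preadditive C]

def IsWeakKernel {K X Y : C} (ι : K ⟶ X) (f : X ⟶ Y) : Prop :=
  ι ≫ f = 0 ∧ ∀ {Z : C} (g : Z ⟶ X), g ≫ f = 0 → ∃ t : Z ⟶ K, t ≫ ι = g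

@[simps]
def postcomp (G : C) {X Y : C} (f : X ⟶ Y) : (G ⟶ X) →ₗ[(End G)ᵐᵒᵖ] (G ⟶ Y) where
  toFun g := g ≫ f
  map_add' _ _ := Preadditive.add_comp _ _ _ _ _ _
  map_smul' _ _ := Category.assoc _ _ _

lemma postcomp_surjective_of_retract (G : C) {X Y : C} (e : Retract X Y) :
    Function.Surjective (postcomp G e.r) :=
  fun φ => ⟨φ ≫ e.i, by simp⟩

variable [HasFiniteBiproducts C]

noncomputable def retractBiproductMap {ι : Type*} [Finite ι] {F F' : ι → C}
    (h : ∀ i, Retract (F i) (F' i)) : Retract (⨁ F) (⨁ F') where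
  i := biproduct.map fun j => (h j).i
  r := biproduct.map fun j => (h j).r

noncomputable def retractBiproductComponent {ι : Type*} [Finite ι] (F : ι → C) (i : ι) :
    Retract (F i) (⨁ F) where
  i := biproduct.ι F i
  r := biproduct.π F i

lemma exists_retract_biproduct_const {n : ℕ} (Cobj : Fin n → C)
    (hgen : ∀ X : C, ∃ (m : ℕ) (g : Fin m → Fin n),
      Nonempty (X ≅ ⨁ (fun j : Fin m => Cobj (g j)))) (X : C) :
    ∃ r : ℕ, Nonempty (Retract X (⨁ fun _ : Fin r => ⨁ Cobj)) := by
  obtain ⟨m, g, ⟨e⟩⟩ := hgen X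
  exact ⟨m, ⟨(Retract.ofIso e).trans (retractBiproductMap fun j => retractBiproductComponent Cobj (g j))⟩⟩

instance finite_hom_biproduct_const (G : C) (p : ℕ) :
    Module.Finite (End G)ᵐᵒᵖ (G ⟶ ⨁ fun _ : Fin p => G) := by
  refine Module.finite_def.2 (Submodule.fg_def.2
    ⟨Set.range (biproduct.ι _), Set.finite_range _, eq_top_iff.2 fun φ _ => ?_⟩)
  rw [← Category.comp_id φ, ← biproduct.total, Preadditive.comp_sum]
  refine Submodule.sum_mem _ fun i _ => ?_
  rw [← Category.assoc]
  exact Submodule.smul_mem (Submodule.span (End G)ᵐᵒᵖ _)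
    (MulOpposite.op (φ ≫ biproduct.π _ i : End G)) (Submodule.subset_span (Set.mem_range_self i))

lemma finite_hom_of_retract (G : C) {X : C} {p : ℕ} (e : Retract X (⨁ fun _ : Fin p => G)) :
    Module.Finite (End G)ᵐᵒᵖ (G ⟶ X) :=
  Module.Finite.of_surjective _ (postcomp_surjective_of_retract G e)

lemma fg_ker_postcomp {G : C} (hA : RightCoherentRing (End G)) {X Y : C} {p q : ℕ}
    (eX : Retract X (⨁ fun _ : Fin p => G)) (eY : Retract Y (⨁ fun _ : Fin q => G))
    (f : X ⟶ Y) : (LinearMap.ker (postcomp G f)).FG := by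
  have := finite_hom_of_retract G eX
  let u : (G ⟶ X) →ₗ[(End G)ᵐᵒᵖ] Fin q → End G :=
    LinearMap.pi fun j => postcomp G (f ≫ eY.i ≫ biproduct.π _ j)
  suffices LinearMap.ker (postcomp G f) = LinearMap.ker u from this ▸ hA.fg_ker_pi u
  ext φ
  change φ ≫ f = 0 ↔ (fun j => φ ≫ f ≫ eY.i ≫ biproduct.π _ j) = 0
  rw [funext_iff]
  refine ⟨fun h j => by simp [reassoc_of% h], fun h => ?_⟩
  have hi : φ ≫ f ≫ eY.i = 0 := biproduct.hom_ext _ _ fun j => by simpa using h j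
  simpa using hi =≫ eY.r

lemma exists_factorization_of_fg_ker {G X Y : C} (f : X ⟶ Y)
    (h : (LinearMap.ker (postcomp G f)).FG) :
    ∃ (m : ℕ) (ι : (⨁ fun _ : Fin m => G) ⟶ X), ι ≫ f = 0 ∧
      ∀ g : G ⟶ X, g ≫ f = 0 → ∃ t, t ≫ ι = g := by
  obtain ⟨m, φ, hφ⟩ := Submodule.fg_iff_exists_fin_generating_family.1 h
  have hker : ∀ g : G ⟶ X, g ≫ f = 0 ↔ g ∈ Submodule.span (End G)ᵐᵒᵖ (Set.range φ) := by
    simp [hφ]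
  refine ⟨m, biproduct.desc φ, biproduct.hom_ext' _ _ fun t => ?_, fun g hg => ?_⟩
  · simpa using (hker (φ t)).2 (Submodule.subset_span (Set.mem_range_self t))
  · obtain ⟨a, rfl⟩ := (Submodule.mem_span_range_iff_exists_fun _).1 ((hker g).1 hg)
    exact ⟨biproduct.lift fun t => (a t).unop, by simp [biproduct.lift_desc, End.smul_left]⟩

lemma isWeakKernel_of_retract_generator {G : C}
    (hG : ∀ Z : C, ∃ r : ℕ, Nonempty (Retract Z (⨁ fun _ : Fin r => G)))
    {K X Y : C} {ι : K ⟶ X} {f : X ⟶ Y} (hι : ι ≫ f = 0)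
    (hlift : ∀ g : G ⟶ X, g ≫ f = 0 → ∃ t, t ≫ ι = g) : IsWeakKernel ι f := by
  refine ⟨hι, fun {Z} g hg => ?_⟩
  obtain ⟨r, ⟨e⟩⟩ := hG Z
  choose t ht using fun j => hlift (biproduct.ι (fun _ : Fin r => G) j ≫ e.r ≫ g) (by simp [hg])
  have hdesc : biproduct.desc t ≫ ι = e.r ≫ g := biproduct.hom_ext' _ _ (by simpa using ht)
  exact ⟨e.i ≫ biproduct.desc t, by simp [hdesc]⟩

end

theorem weak_kernels_of_coherent_general
    (C : Type u) [Category.{v} C] [Preadditive C]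
    [HasFiniteBiproducts C]
    (n : ℕ) (Cobj : Fin n → C)
    (hgen : ∀ X : C, ∃ (m : ℕ) (g : Fin m → Fin n),
      Nonempty (X ≅ ⨁ (fun j : Fin m => Cobj (g j))))
    (hcoh : RightCoherentRing (End (⨁ Cobj))) :
    ∀ {X Y : C} (f : X ⟶ Y), ∃ (K : C) (kk : K ⟶ X), kk ≫ f = 0 ∧
      ∀ {Z : C} (g : Z ⟶ X), g ≫ f = 0 → ∃ t : Z ⟶ K, t ≫ kk = g := by
  intro X Y f
  have hG := exists_retract_biproduct_const Cobj hgen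
  obtain ⟨p, ⟨eX⟩⟩ := hG X
  obtain ⟨q, ⟨eY⟩⟩ := hG Y
  obtain ⟨m, ι, hι, hlift⟩ := exists_factorization_of_fg_ker f (fg_ker_postcomp hcoh eX eY f)
  exact ⟨_, ι, isWeakKernel_of_retract_generator hG hι hlift⟩

/-- Let `C` be a `k`-linear additive category additively generated by
finitely many objects `C₁, …, Cₙ`. If the endomorphism algebra `A = End(⊕ᵢ Cᵢ)` is right
coherent, then `C` has weak kernels. -/
theorem weak_kernels_of_coherent
    (k : Type*) [Field k]
    (C : Type u) [Category.{v} C] [Preadditive C] [CategoryTheory.Linear k C]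
    [HasFiniteBiproducts C]
    (n : ℕ) (Cobj : Fin n → C)
    (hgen : ∀ X : C, ∃ (m : ℕ) (g : Fin m → Fin n),
      Nonempty (X ≅ ⨁ (fun j : Fin m => Cobj (g j))))
    (hcoh : RightCoherentRing (End (⨁ Cobj))) :
    ∀ {X Y : C} (f : X ⟶ Y), ∃ (K : C) (kk : K ⟶ X), kk ≫ f = 0 ∧
      ∀ {Z : C} (g : Z ⟶ X), g ≫ f = 0 → ∃ t : Z ⟶ K, t ≫ kk = g :=
  weak_kernels_of_coherent_general C n Cobj hgen hcoh

end CoherentWeakKernels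
end

section
/- Let C be a k-linear, Hom-finite additive category additively generated by objects C₁,…,Cₙ such that each endomorphism ring End(Cᵢ) is local. Then C is idempotent split: every idempotent endomorphism in C splits. -/
/-!
Every object is a finite biproduct of the `Cᵢ`, so by induction it suffices to split an
idempotent `e` on `X = A ⊕ Y` (inclusion `ι`, projection `π`) with `End A` local, assuming all
idempotents on `Y` split. Since `End A` is local, `u = ι ≫ e ≫ π` or `1 - u` is a unit. If `u` is,
then `a = ι ≫ e` and `b = e ≫ π ≫ u⁻¹` satisfy `a ≫ b = 𝟙`, so `e` is the orthogonal sum of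
`b ≫ a`, split through `A`, and `e - b ≫ a`; if `1 - u` is, put `b = (𝟙 - e) ≫ π ≫ (1 - u)⁻¹`.
Either way `b` is a retraction of `ι` killed by the remaining idempotent `f`, and then
`f = f ≫ (𝟙 - π ≫ ι) ≫ (𝟙 - b ≫ ι)` factors through `Y`. An idempotent `w ≫ u` whose reverse
composite `u ≫ w` lives on `Y` splits because `u ≫ w` does.
-/
open CategoryTheory CategoryTheory.Limits

universe v u

namespace LocalIdempotentSplit

section Splitting

variable {C : Type u} [Category.{v} C]

def Splits {X : C} (e : X ⟶ X) : Prop :=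
  ∃ (Y : C) (i : Y ⟶ X) (r : X ⟶ Y), i ≫ r = 𝟙 Y ∧ r ≫ i = e

def IdempotentsSplit (X : C) : Prop :=
  ∀ e : X ⟶ X, e ≫ e = e → Splits e

lemma splits_id (X : C) : Splits (𝟙 X) :=
  ⟨X, 𝟙 X, 𝟙 X, Category.id_comp _, Category.id_comp _⟩

lemma Splits.comp_swap {X X' : C} {u : X ⟶ X'} {w : X' ⟶ X} (hs : Splits (u ≫ w))
    (hidem : (w ≫ u) ≫ (w ≫ u) = w ≫ u) : Splits (w ≫ u) := by
  obtain ⟨Y, i, r, hir, hri⟩ := hs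
  refine ⟨Y, i ≫ u, w ≫ r, ?_, ?_⟩
  · calc (i ≫ u) ≫ w ≫ r = i ≫ (u ≫ w) ≫ r := by simp
      _ = (i ≫ r) ≫ (i ≫ r) := by rw [← hri]; simp
      _ = 𝟙 Y := by rw [hir, Category.comp_id]
  · calc (w ≫ r) ≫ i ≫ u = w ≫ (r ≫ i) ≫ u := by simp
      _ = (w ≫ u) ≫ (w ≫ u) := by rw [hri]; simp
      _ = w ≫ u := hidem

lemma splits_of_factorsThrough {X Y : C} (hY : IdempotentsSplit Y) {e : X ⟶ X}
    (he : e ≫ e = e) (r : X ⟶ Y) (j : Y ⟶ X) (hfac : e ≫ r ≫ j ≫ e = e) : Splits e := by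
  have hswap : (e ≫ r) ≫ (j ≫ e) = e := by simpa only [Category.assoc] using hfac
  have hs : Splits ((j ≫ e) ≫ (e ≫ r)) := by
    refine hY _ ?_
    simp only [Category.assoc, reassoc_of% he]
    rw [reassoc_of% hfac]
  simpa only [hswap] using hs.comp_swap (by rw [hswap, he])

lemma IdempotentsSplit.of_iso {X X' : C} (h : X ≅ X') (hX : IdempotentsSplit X) :
    IdempotentsSplit X' :=
  fun _ he => splits_of_factorsThrough hX he h.inv h.hom (by simp [he])

end Splitting

section Preadditive

variable {C : Type u} [Category.{v} C] [Preadditive C]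

lemma Splits.add [HasBinaryBiproducts C] {X : C} {e₁ e₂ : X ⟶ X} (h₁ : Splits e₁)
    (h₂ : Splits e₂) (h₁₂ : e₁ ≫ e₂ = 0) (h₂₁ : e₂ ≫ e₁ = 0) : Splits (e₁ + e₂) := by
  obtain ⟨Y₁, i₁, r₁, hir₁, hri₁⟩ := h₁
  obtain ⟨Y₂, i₂, r₂, hir₂, hri₂⟩ := h₂
  have orth {Y Y' : C} {i : Y ⟶ X} {r : X ⟶ Y} {i' : Y' ⟶ X} {r' : X ⟶ Y'}
      (hir : i ≫ r = 𝟙 Y) (hir' : i' ≫ r' = 𝟙 Y') (h : (r ≫ i) ≫ (r' ≫ i') = 0) :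
      i ≫ r' = 0 := by
    calc i ≫ r' = (i ≫ r) ≫ i ≫ r' ≫ (i' ≫ r') := by rw [hir, hir']; simp
      _ = i ≫ ((r ≫ i) ≫ (r' ≫ i')) ≫ r' := by simp
      _ = 0 := by rw [h]; simp
  refine ⟨Y₁ ⊞ Y₂, biprod.desc i₁ i₂, biprod.lift r₁ r₂, ?_, ?_⟩
  · ext <;> simp [hir₁, hir₂, orth hir₁ hir₂ (hri₁ ▸ hri₂ ▸ h₁₂),
      orth hir₂ hir₁ (hri₁ ▸ hri₂ ▸ h₂₁)]
  · rw [biprod.lift_desc, hri₁, hri₂]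

variable {X A Y : C} {ι : A ⟶ X} {π : X ⟶ A} {r : X ⟶ Y} {j : Y ⟶ X}

lemma splits_of_comp_retraction_eq_zero (hY : IdempotentsSplit Y)
    (htotal : π ≫ ι + r ≫ j = 𝟙 X) {e : X ⟶ X} (he : e ≫ e = e) {b : X ⟶ A}
    (hιb : ι ≫ b = 𝟙 A) (heb : e ≫ b = 0) : Splits e := by
  refine splits_of_factorsThrough hY he r (j ≫ (𝟙 X - b ≫ ι)) ?_
  have hrj : r ≫ j = 𝟙 X - π ≫ ι := eq_sub_of_add_eq' htotal
  have : e ≫ r ≫ j ≫ (𝟙 X - b ≫ ι) = e := by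
    rw [reassoc_of% hrj]
    simp only [Preadditive.comp_sub, Preadditive.sub_comp, Category.comp_id, Category.id_comp,
      Category.assoc, reassoc_of% heb, reassoc_of% hιb, Limits.zero_comp]
    abel
  calc e ≫ r ≫ (j ≫ (𝟙 X - b ≫ ι)) ≫ e = (e ≫ r ≫ j ≫ (𝟙 X - b ≫ ι)) ≫ e := by
        simp only [Category.assoc]
    _ = e := by rw [this, he]

lemma splits_of_isUnit_corner [HasBinaryBiproducts C] (hY : IdempotentsSplit Y)
    (htotal : π ≫ ι + r ≫ j = 𝟙 X) {e : X ⟶ X} (he : e ≫ e = e) {v : A ⟶ A}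
    (hv : (ι ≫ e ≫ π) ≫ v = 𝟙 A) : Splits e := by
  set a := ι ≫ e
  set b := e ≫ π ≫ v
  have hab : a ≫ b = 𝟙 A := by simpa [a, b, reassoc_of% he] using hv
  have hιb : ι ≫ b = 𝟙 A := by simpa [b] using hv
  have heb : e ≫ b = b := by simp [b, reassoc_of% he]
  have hbab : b ≫ a ≫ b = b := by rw [hab, Category.comp_id]
  have hpe : (b ≫ a) ≫ e = b ≫ a := by simp [a, he]
  have hep : e ≫ b ≫ a = b ≫ a := by rw [reassoc_of% heb]
  have hpp : (b ≫ a) ≫ (b ≫ a) = b ≫ a := by simp [reassoc_of% hab]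
  have hrest : (e - b ≫ a) ≫ (e - b ≫ a) = e - b ≫ a := by
    simp only [Preadditive.comp_sub, Preadditive.sub_comp, he, hpe, hep, hpp]
    abel
  have hrest_b : (e - b ≫ a) ≫ b = 0 := by
    rw [Preadditive.sub_comp, heb, Category.assoc, hbab, sub_self]
  have hsplit := (show Splits (b ≫ a) from ⟨A, a, b, hab, rfl⟩).add
    (splits_of_comp_retraction_eq_zero hY htotal hrest hιb hrest_b)
    (by rw [Preadditive.comp_sub, hpe, hpp, sub_self])
    (by rw [Preadditive.sub_comp, hep, hpp, sub_self])
  rwa [add_sub_cancel] at hsplit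

lemma splits_of_isUnit_corner_one_sub (hY : IdempotentsSplit Y)
    (htotal : π ≫ ι + r ≫ j = 𝟙 X) (hιπ : ι ≫ π = 𝟙 A) {e : X ⟶ X} (he : e ≫ e = e)
    {v : A ⟶ A} (hv : (𝟙 A - ι ≫ e ≫ π) ≫ v = 𝟙 A) : Splits e := by
  refine splits_of_comp_retraction_eq_zero hY htotal he (b := (𝟙 X - e) ≫ π ≫ v) ?_ ?_
  · simpa [Preadditive.comp_sub, reassoc_of% hιπ] using hv
  · simp [Preadditive.comp_sub, reassoc_of% he]

lemma idempotentsSplit_of_isLocalRing_summand [HasBinaryBiproducts C] [IsLocalRing (End A)]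
    (hY : IdempotentsSplit Y) (hιπ : ι ≫ π = 𝟙 A) (htotal : π ≫ ι + r ≫ j = 𝟙 X) :
    IdempotentsSplit X := by
  intro e he
  rcases IsLocalRing.isUnit_or_isUnit_of_add_one (add_sub_cancel (show End A from ι ≫ e ≫ π) 1)
    with hu | hu
  · obtain ⟨v, hv⟩ := hu.exists_left_inv
    exact splits_of_isUnit_corner hY htotal he hv
  · obtain ⟨v, hv⟩ := hu.exists_left_inv
    exact splits_of_isUnit_corner_one_sub hY htotal hιπ he hv

lemma idempotentsSplit_biproduct [HasFiniteBiproducts C] :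
    ∀ {m : ℕ} (F : Fin m → C), (∀ i, IsLocalRing (End (F i))) → IdempotentsSplit (⨁ F)
  | 0, F, _ => fun e _ => by
    rw [show e = 𝟙 _ from biproduct.hom_ext _ _ fun i => i.elim0]
    exact splits_id _
  | m + 1, F, hF => by
    have := hF 0
    have := hasBinaryBiproducts_of_finite_biproducts C
    refine idempotentsSplit_of_isLocalRing_summand
      (idempotentsSplit_biproduct _ fun i => hF i.succ) (biproduct.ι_π_self F 0)
      (r := biproduct.lift fun i => biproduct.π F i.succ)
      (j := biproduct.desc fun i => biproduct.ι F i.succ) ?_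
    rw [biproduct.lift_desc, ← biproduct.total, Fin.sum_univ_succ]

end Preadditive

theorem idempotentComplete_of_local_generators_general
    (C : Type u) [Category.{v} C] [Preadditive C]
    [HasFiniteBiproducts C]
    (n : ℕ) (Cobj : Fin n → C)
    (hgen : ∀ X : C, ∃ (m : ℕ) (g : Fin m → Fin n),
      Nonempty (X ≅ ⨁ (fun j : Fin m => Cobj (g j))))
    (hloc : ∀ i : Fin n, IsLocalRing (End (Cobj i))) :
    IsIdempotentComplete C := by
  refine ⟨fun X p hp => ?_⟩
  obtain ⟨m, g, ⟨h⟩⟩ := hgen X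
  exact (idempotentsSplit_biproduct _ fun i => hloc (g i)).of_iso h.symm p hp

/-- Let `C` be a `k`-linear, Hom-finite additive category additively
generated by objects `C₁, …, Cₙ` such that each endomorphism ring `End(Cᵢ)` is local.
Then `C` is idempotent split: every idempotent endomorphism in `C` splits. -/
theorem idempotentComplete_of_local_generators
    (k : Type*) [Field k]
    (C : Type u) [Category.{v} C] [Preadditive C] [CategoryTheory.Linear k C]
    [HasFiniteBiproducts C]
    (hfin : ∀ X Y : C, FiniteDimensional k (X ⟶ Y))
    (n : ℕ) (Cobj : Fin n → C)
    (hgen : ∀ X : C, ∃ (m : ℕ) (g : Fin m → Fin n),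
      Nonempty (X ≅ ⨁ (fun j : Fin m => Cobj (g j))))
    (hloc : ∀ i : Fin n, IsLocalRing (End (Cobj i))) :
    IsIdempotentComplete C :=
  idempotentComplete_of_local_generators_general C n Cobj hgen hloc

end LocalIdempotentSplit
end

section
/- Let i_* : A₁ → A be the inclusion of a colocalising Serre subcategory of an abelian category A, let j^* : A → A/A₁ be the quotient functor and j_! its (fully faithful) left adjoint. Then i_* admits a left adjoint i^* : A → A₁, and for every A ∈ A the adjunction morphisms fit into an exact sequence j_!j^*A → A → i_*i^*A → 0, so i_*i^*A is the cokernel of the counit ε_A : j_!j^*A → A. -/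
/-! The counit `ε_X : j_! j^* X ⟶ X` becomes an isomorphism under `j^*` because `j_!` is fully
faithful, so the right exact functor `j^*` kills `coker ε_X`, which therefore lies in `A₁`.
Every morphism `X ⟶ i Z` kills `ε_X`, since morphisms `j_! W ⟶ i Z` are adjoint to morphisms
`W ⟶ j^* i Z = 0`. Hence `X ⟶ coker ε_X` is a universal arrow from `X` to `i`: it is the unit of
a left adjoint of `i`, and it is the cokernel of `ε_X` by construction. -/

open CategoryTheory CategoryTheory.Limits

universe v₁ v₂ v₃ u₁ u₂ u₃

namespace CategoryTheory

lemma isZero_obj_cokernel_of_isIso_map {C : Type u₁} [Category.{v₁} C] [HasZeroMorphisms C]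
    {D : Type u₂} [Category.{v₂} D] [HasZeroMorphisms D] (F : C ⥤ D) [F.PreservesZeroMorphisms]
    {X Y : C} (f : X ⟶ Y) [HasCokernel f] [HasCokernel (F.map f)]
    [PreservesColimit (parallelPair f 0) F] [IsIso (F.map f)] : IsZero (F.obj (cokernel f)) :=
  (isZero_cokernel_of_epi (F.map f)).of_iso (PreservesCokernel.iso F f)

lemma Adjunction.counit_app_comp_eq_zero_of_isZero {C : Type u₁} [Category.{v₁} C] [HasZeroMorphisms C]
    {D : Type u₂} [Category.{v₂} D] [HasZeroMorphisms D] {L : C ⥤ D} {R : D ⥤ C} (adj : L ⊣ R)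
    {X Z : D} (hZ : IsZero (R.obj Z)) (f : X ⟶ Z) : adj.counit.app X ≫ f = 0 := by
  have := adj.isLeftAdjoint
  calc adj.counit.app X ≫ f = L.map (R.map f) ≫ adj.counit.app Z := (adj.counit_naturality f).symm
    _ = 0 := by rw [hZ.eq_of_tgt (R.map f) 0, L.map_zero, zero_comp]

end CategoryTheory

namespace Colocalising

section CokernelReflector

variable {A : Type u₁} [Category.{v₁} A] [Abelian A] {A₁ : Type u₃} [Category.{v₃} A₁]
  (i : A₁ ⥤ A) {K : A → A} (p : ∀ X, K X ⟶ X) (hcok : ∀ X, i.essImage (cokernel (p X)))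

noncomputable def cokernelReflectorUnit (X : A) : X ⟶ i.obj (hcok X).witness :=
  cokernel.π (p X) ≫ (hcok X).getIso.inv

lemma epi_cokernelReflectorUnit (X : A) : Epi (cokernelReflectorUnit i p hcok X) :=
  epi_comp _ _

lemma exact_cokernelReflectorUnit (X : A) :
    (ShortComplex.mk (p X) (cokernelReflectorUnit i p hcok X)
      (by simp [cokernelReflectorUnit])).Exact := by
  refine ShortComplex.exact_of_iso ?_ (ShortComplex.exact_cokernel (p X))
  exact ShortComplex.isoMk (Iso.refl _) (Iso.refl _) (hcok X).getIso.symm (by simp)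
    (by simp [cokernelReflectorUnit])

variable [i.Full] [i.Faithful] (horth : ∀ X Z (f : X ⟶ i.obj Z), p X ≫ f = 0)

noncomputable def cokernelReflectorHomEquiv (X : A) (Z : A₁) :
    ((hcok X).witness ⟶ Z) ≃ (X ⟶ i.obj Z) where
  toFun g := cokernelReflectorUnit i p hcok X ≫ i.map g
  invFun f := i.preimage ((hcok X).getIso.hom ≫ cokernel.desc _ f (horth X Z f))
  left_inv g := i.map_injective <| by
    rw [Functor.map_preimage, ← Iso.eq_inv_comp]
    exact coequalizer.hom_ext (by simp [cokernelReflectorUnit])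
  right_inv f := by simp [cokernelReflectorUnit]

noncomputable def cokernelReflector : A ⥤ A₁ :=
  Adjunction.leftAdjointOfEquiv (cokernelReflectorHomEquiv i p hcok horth)
    (fun _ _ _ _ _ => by simp [cokernelReflectorHomEquiv])

noncomputable def cokernelReflectorAdjunction : cokernelReflector i p hcok horth ⊣ i :=
  Adjunction.adjunctionOfEquivLeft _ _

lemma cokernelReflectorAdjunction_unit_app (X : A) :
    (cokernelReflectorAdjunction i p hcok horth).unit.app X = cokernelReflectorUnit i p hcok X := by
  show cokernelReflectorUnit i p hcok X ≫ i.map (𝟙 _) = _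
  rw [i.map_id, Category.comp_id]

end CokernelReflector

/-- Let `i : A₁ → A` be the inclusion of a colocalising Serre
subcategory of an abelian category `A`: `A₁` is (the essential image of a fully faithful
exact functor identified with) the kernel of the exact quotient functor
`j^* : A → A/A₁ = Q`, and `j^*` admits a (fully faithful) left adjoint `j_!`.
Then `i` admits a left adjoint `i^* : A → A₁`, and for every `X ∈ A` the adjunction
morphisms fit into an exact sequence `j_!j^*X → X → i(i^*X) → 0`; in particular
`i(i^*X)` is the cokernel of the counit `ε_X : j_!j^*X → X`. -/
theorem colocalising_left_adjoint
    {A : Type u₁} [Category.{v₁} A] [Abelian A]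
    {Q : Type u₂} [Category.{v₂} Q] [Abelian Q]
    {A₁ : Type u₃} [Category.{v₃} A₁]
    -- the quotient functor `j^* : A ⥤ Q`: exact and essentially surjective
    (jstar : A ⥤ Q)
    (_ : Nonempty (PreservesFiniteColimits jstar))
    -- its fully faithful left adjoint `j_!`
    (jshriek : Q ⥤ A) [jshriek.Full] [jshriek.Faithful]
    (adjQ : jshriek ⊣ jstar)
    -- the inclusion `i` of the Serre subcategory `A₁ = ker j^*`
    (i : A₁ ⥤ A) [i.Full] [i.Faithful]
    (hker : ∀ X : A, IsZero (jstar.obj X) ↔ ∃ Y : A₁, Nonempty (X ≅ i.obj Y)) :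
    ∃ (istar : A ⥤ A₁) (adj₂ : istar ⊣ i),
      ∀ X : A, ∃ w : adjQ.counit.app X ≫ adj₂.unit.app X = 0,
        Epi (adj₂.unit.app X) ∧
        (ShortComplex.mk (adjQ.counit.app X) (adj₂.unit.app X) w).Exact := by
  have : PreservesFiniteColimits jstar := Nonempty.some (by assumption)
  have hcok (X : A) : i.essImage (cokernel (adjQ.counit.app X)) := by
    obtain ⟨Y, ⟨e⟩⟩ := (hker _).1 (isZero_obj_cokernel_of_isIso_map jstar (adjQ.counit.app X))
    exact ⟨Y, ⟨e.symm⟩⟩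
  have horth (X : A) (Z : A₁) (f : X ⟶ i.obj Z) : adjQ.counit.app X ≫ f = 0 :=
    adjQ.counit_app_comp_eq_zero_of_isZero ((hker _).2 ⟨Z, ⟨Iso.refl _⟩⟩) f
  refine ⟨_, cokernelReflectorAdjunction i adjQ.counit.app hcok horth, fun X => ?_⟩
  rw [cokernelReflectorAdjunction_unit_app]
  exact ⟨_, epi_cokernelReflectorUnit .., exact_cokernelReflectorUnit ..⟩

end Colocalising
end
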